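/- For the Freud weight w(x;t) = exp(−x⁴ + t x²) with t ∈ ℝ, the nontrivial leading coefficients satisfy the second-order nonlinear difference equation: for every n ≥ 1, (p(n−1,t) − p(n+1,t))·[n + 2t(p(n,t) − p(n+1,t)) − 4(p(n−1,t) − p(n,t))(p(n,t) − p(n+1,t))] + p(n,t) + p(n+1,t) − 2t(p(n,t) − p(n+1,t))² = 0. -/

import Mathlib

/-!
The functional `L q = ∫ q(x) e^{-x⁴+tx²} dx` is positive definite and even, and integration by
parts gives `L q' = L (q (4X³ - 2tX))`. Evenness forces `P n` to have the parity of `n`, so the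
monic orthogonal polynomials satisfy `X P_n = P_{n+1} + β_n P_{n-1}`, and comparing coefficients
of `X^{n-1}` gives `β_n = p n - p (n+1)`. Integrating by parts against `q = P_{m+1} P_m` yields
Freud's string equation `m + 1 = 4 β_{m+1} (β_m + β_{m+1} + β_{m+2}) - 2t β_{m+1}`. The claimed
identity is the string equation combined with its first integral
`4 β_{m+1} (β_{m+1} + β_{m+2}) (β_m + β_{m+1}) - 2t β_{m+1}² - β_{m+1} + 2 p (m+1) = 0`.
-/

open MeasureTheory Real

open Polynomial

namespace Polynomial

variable {R : Type*} [Ring R]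

theorem degree_sub_C_coeff_mul_lt {p q : R[X]} {n : ℕ} (hq : q.degree ≤ n) (hp : p.Monic)
    (hpn : p.natDegree = n) : (q - C (q.coeff n) * p).degree < n := by
  rw [degree_lt_iff_coeff_zero]
  intro m hm
  rw [coeff_sub, coeff_C_mul]
  rcases hm.eq_or_lt with rfl | hm
  · rw [← hpn, hp.coeff_natDegree, mul_one, sub_self]
  · rw [coeff_eq_zero_of_degree_lt (hq.trans_lt (by exact_mod_cast hm)),
      coeff_eq_zero_of_natDegree_lt (p := p) (by omega), mul_zero, sub_zero]

theorem degree_X_mul_lt_succ {q : R[X]} {n : ℕ} (hq : q.degree < n) :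
    (X * q).degree < ↑(n + 1) := by
  rw [degree_lt_iff_coeff_zero] at hq ⊢
  intro m hm
  obtain ⟨k, rfl⟩ : ∃ k, m = k + 1 := ⟨m - 1, by omega⟩
  rw [coeff_X_mul]
  exact hq k (by omega)

end Polynomial

theorem LinearMap.map_C_mul {R : Type*} [CommSemiring R] (L : R[X] →ₗ[R] R) (c : R) (q : R[X]) :
    L (C c * q) = c * L q := by
  rw [← smul_eq_C_mul, map_smul, smul_eq_mul]

section OrthogonalPolynomials

variable {K : Type*} [Field K]

structure IsMonicOrthogonal (L : K[X] →ₗ[K] K) (P : ℕ → K[X]) : Prop where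
  monic : ∀ n, (P n).Monic
  natDegree_eq : ∀ n, (P n).natDegree = n
  orthogonal : ∀ ⦃j k⦄, j ≠ k → L (P j * P k) = 0

-- The `β n` of `X * P n = P (n + 1) + β n * P (n - 1)`: the coefficient of `X ^ (n - 1)`.
noncomputable def recurrenceCoeff (P : ℕ → K[X]) (n : ℕ) : K :=
  (X * P n - P (n + 1)).coeff (n - 1)

namespace IsMonicOrthogonal

variable {L : K[X] →ₗ[K] K} {P : ℕ → K[X]}

theorem coeff_self (hP : IsMonicOrthogonal L P) (n : ℕ) : (P n).coeff n = 1 := by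
  simpa [hP.natDegree_eq n] using (hP.monic n).coeff_natDegree

theorem degree_eq (hP : IsMonicOrthogonal L P) (n : ℕ) : (P n).degree = n := by
  rw [degree_eq_natDegree (hP.monic n).ne_zero, hP.natDegree_eq]

theorem apply_mul_eq_zero_of_degree_lt (hP : IsMonicOrthogonal L P) {n : ℕ} {q : K[X]}
    (hq : q.degree < n) : L (P n * q) = 0 := by
  suffices ∀ d ≤ n, ∀ q : K[X], q.degree < d → L (P n * q) = 0 from this n le_rfl q hq
  intro d
  induction d with
  | zero =>
    intro _ q hq
    rw [Nat.cast_zero, Nat.WithBot.lt_zero_iff, degree_eq_bot] at hq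
    rw [hq, mul_zero, map_zero]
  | succ d ih =>
    intro hd q hq
    have hlow :=
      degree_sub_C_coeff_mul_lt (Order.le_of_lt_succ hq) (hP.monic d) (hP.natDegree_eq d)
    rw [← sub_add_cancel q (C (q.coeff d) * P d), mul_add, map_add, ih (by omega) _ hlow,
      mul_left_comm, L.map_C_mul, hP.orthogonal (by omega), mul_zero, zero_add]

theorem apply_mul_eq_coeff_mul (hP : IsMonicOrthogonal L P) {n : ℕ} {q : K[X]}
    (hq : q.degree ≤ n) : L (P n * q) = q.coeff n * L (P n * P n) := by
  have hlow := hP.apply_mul_eq_zero_of_degree_lt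
    (degree_sub_C_coeff_mul_lt hq (hP.monic n) (hP.natDegree_eq n))
  rwa [mul_sub, map_sub, mul_left_comm, L.map_C_mul, sub_eq_zero] at hlow

theorem apply_mul_X_pow_mul (hP : IsMonicOrthogonal L P) (n k : ℕ) :
    L (P (n + k) * (X ^ k * P n)) = L (P (n + k) * P (n + k)) := by
  have hdeg : (X ^ k * P n).natDegree = n + k := by
    rw [(monic_X_pow k).natDegree_mul (hP.monic n), natDegree_X_pow, hP.natDegree_eq, add_comm]
  rw [hP.apply_mul_eq_coeff_mul (hdeg ▸ degree_le_natDegree),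
    ← hdeg, ((monic_X_pow k).mul (hP.monic n)).coeff_natDegree, one_mul]

theorem apply_mul_self_ne_zero (hP : IsMonicOrthogonal L P) (hL : ∀ q, L (q * q) = 0 → q = 0)
    (n : ℕ) : L (P n * P n) ≠ 0 :=
  fun h => (hP.monic n).ne_zero (hL _ h)

theorem eq_C_coeff_mul_of_forall_apply_mul (hP : IsMonicOrthogonal L P)
    (hL : ∀ q, L (q * q) = 0 → q = 0) {n : ℕ} {r : K[X]} (hr : r.degree ≤ n)
    (horth : ∀ q : K[X], q.degree < n → L (r * q) = 0) : r = C (r.coeff n) * P n := by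
  set s := r - C (r.coeff n) * P n
  have hs : s.degree < n := degree_sub_C_coeff_mul_lt hr (hP.monic n) (hP.natDegree_eq n)
  have hss : L (s * s) = 0 := by
    rw [show s * s = r * s - C (r.coeff n) * (P n * s) by ring, map_sub, L.map_C_mul,
      horth s hs, hP.apply_mul_eq_zero_of_degree_lt hs, mul_zero, sub_zero]
  exact sub_eq_zero.mp (hL s hss)

theorem comp_neg_X (hP : IsMonicOrthogonal L P) (hL : ∀ q, L (q * q) = 0 → q = 0)
    (heven : ∀ q, L (q.comp (-X)) = L q) (n : ℕ) : (P n).comp (-X) = C ((-1) ^ n) * P n := by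
  have hdeg : ((P n).comp (-X)).natDegree = n := by
    rw [natDegree_eq_of_degree_eq degree_comp_neg_X, hP.natDegree_eq]
  have hcoeff : ((P n).comp (-X)).coeff n = (-1) ^ n := by
    have h := comp_neg_X_leadingCoeff_eq (P n)
    rwa [leadingCoeff, hdeg, (hP.monic n).leadingCoeff, hP.natDegree_eq, mul_one] at h
  rw [← hcoeff]
  refine hP.eq_C_coeff_mul_of_forall_apply_mul hL (degree_le_of_natDegree_le hdeg.le)
    fun q hq => ?_
  rw [← comp_neg_X_comp_neg_X q, ← mul_comp_neg_X, heven]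
  exact hP.apply_mul_eq_zero_of_degree_lt (degree_comp_neg_X.trans_lt hq)

theorem apply_X_mul_mul_self [CharZero K] (hP : IsMonicOrthogonal L P)
    (hL : ∀ q, L (q * q) = 0 → q = 0) (heven : ∀ q, L (q.comp (-X)) = L q) (n : ℕ) :
    L (X * (P n * P n)) = 0 := by
  have hsign : C ((-1 : K) ^ n) * C ((-1) ^ n) = 1 := by
    rw [← C_mul, ← mul_pow, neg_one_mul, neg_neg, one_pow, C_1]
  have hodd : (X * (P n * P n)).comp (-X) = -(X * (P n * P n)) := by
    rw [mul_comp_neg_X, mul_comp_neg_X, X_comp, hP.comp_neg_X hL heven]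
    linear_combination (-(X * (P n * P n))) * hsign
  have h := heven (X * (P n * P n))
  rwa [hodd, map_neg, CharZero.neg_eq_self_iff] at h

theorem degree_X_mul_sub_lt [CharZero K] (hP : IsMonicOrthogonal L P)
    (hL : ∀ q, L (q * q) = 0 → q = 0) (heven : ∀ q, L (q.comp (-X)) = L q) (n : ℕ) :
    (X * P n - P (n + 1)).degree < ↑n := by
  set r := X * P n - P (n + 1)
  have hle : r.degree ≤ n := by
    have hXP : (X * P n).natDegree = n + 1 := by
      rw [natDegree_X_mul (hP.monic n).ne_zero, hP.natDegree_eq]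
    have h := degree_sub_C_coeff_mul_lt (degree_le_of_natDegree_le hXP.le) (hP.monic (n + 1))
      (hP.natDegree_eq (n + 1))
    rw [coeff_X_mul, hP.coeff_self, C_1, one_mul] at h
    exact Order.le_of_lt_succ h
  have hcoeff : r.coeff n = 0 := by
    have h : L (P n * r) = 0 := by
      rw [mul_sub, map_sub, hP.orthogonal (by omega), sub_zero, mul_left_comm,
        hP.apply_X_mul_mul_self hL heven]
    rw [hP.apply_mul_eq_coeff_mul hle] at h
    exact (mul_eq_zero.1 h).resolve_right (hP.apply_mul_self_ne_zero hL n)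
  exact lt_of_le_of_ne hle fun h => coeff_ne_zero_of_eq_degree h hcoeff

theorem X_mul_eq_add [CharZero K] (hP : IsMonicOrthogonal L P)
    (hL : ∀ q, L (q * q) = 0 → q = 0) (heven : ∀ q, L (q.comp (-X)) = L q) (n : ℕ) :
    X * P n = P (n + 1) + C (recurrenceCoeff P n) * P (n - 1) := by
  have hr := hP.degree_X_mul_sub_lt hL heven n
  rw [← sub_eq_iff_eq_add', recurrenceCoeff]
  rcases n with _ | n
  · rw [Nat.cast_zero, Nat.WithBot.lt_zero_iff, degree_eq_bot] at hr
    rw [hr, coeff_zero, C_0, zero_mul]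
  · rw [Nat.add_sub_cancel]
    refine hP.eq_C_coeff_mul_of_forall_apply_mul hL (Order.le_of_lt_succ hr) fun q hq => ?_
    rw [sub_mul, map_sub, mul_assoc, mul_left_comm,
      hP.apply_mul_eq_zero_of_degree_lt (degree_X_mul_lt_succ hq),
      hP.apply_mul_eq_zero_of_degree_lt
        (hq.trans (by exact_mod_cast (by omega : n < n + 1 + 1))),
      sub_zero]

theorem recurrenceCoeff_zero [CharZero K] (hP : IsMonicOrthogonal L P)
    (hL : ∀ q, L (q * q) = 0 → q = 0) (heven : ∀ q, L (q.comp (-X)) = L q) :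
    recurrenceCoeff P 0 = 0 := by
  have hr := hP.degree_X_mul_sub_lt hL heven 0
  rw [Nat.cast_zero, Nat.WithBot.lt_zero_iff, degree_eq_bot] at hr
  rw [recurrenceCoeff, hr, coeff_zero]

theorem apply_mul_self_succ [CharZero K] (hP : IsMonicOrthogonal L P)
    (hL : ∀ q, L (q * q) = 0 → q = 0) (heven : ∀ q, L (q.comp (-X)) = L q) (n : ℕ) :
    L (P (n + 1) * P (n + 1)) = recurrenceCoeff P (n + 1) * L (P n * P n) := by
  calc L (P (n + 1) * P (n + 1)) = L (P (n + 1) * (X ^ 1 * P n)) :=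
        (hP.apply_mul_X_pow_mul n 1).symm
    _ = L (P n * (X * P (n + 1))) := by ring_nf
    _ = recurrenceCoeff P (n + 1) * L (P n * P n) := by
        rw [hP.X_mul_eq_add hL heven, Nat.add_sub_cancel, mul_add, map_add,
          hP.orthogonal (by omega), mul_left_comm, L.map_C_mul, zero_add]

theorem apply_derivative_mul (hP : IsMonicOrthogonal L P) (m : ℕ) :
    L (derivative (P (m + 1) * P m)) = (m + 1) * L (P m * P m) := by
  have hlt : ∀ n, (derivative (P n)).degree < n := fun n =>
    (hP.degree_eq n) ▸ degree_derivative_lt (hP.monic n).ne_zero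
  rw [derivative_mul, map_add, mul_comm,
    hP.apply_mul_eq_coeff_mul (Order.le_of_lt_succ (hlt (m + 1))),
    hP.apply_mul_eq_zero_of_degree_lt ((hlt m).trans (by exact_mod_cast m.lt_succ_self)),
    coeff_derivative, hP.coeff_self, one_mul, add_zero]

theorem apply_X_pow_three_mul [CharZero K] (hP : IsMonicOrthogonal L P)
    (hL : ∀ q, L (q * q) = 0 → q = 0) (heven : ∀ q, L (q.comp (-X)) = L q) (m : ℕ) :
    L (X ^ 3 * (P (m + 1) * P m)) = recurrenceCoeff P (m + 1) *
      (recurrenceCoeff P m + recurrenceCoeff P (m + 1) + recurrenceCoeff P (m + 2)) *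
        L (P m * P m) := by
  have hsq : L (X * P (m + 1) * (X * P (m + 1))) =
      L (P (m + 2) * P (m + 2)) + recurrenceCoeff P (m + 1) ^ 2 * L (P m * P m) := by
    rw [hP.X_mul_eq_add hL heven (m + 1), Nat.add_sub_cancel]
    set b := recurrenceCoeff P (m + 1)
    rw [show (P (m + 2) + C b * P m) * (P (m + 2) + C b * P m) =
        P (m + 2) * P (m + 2) + C (2 * b) * (P m * P (m + 2)) + C (b ^ 2) * (P m * P m) by
          simp only [map_mul, map_pow, map_ofNat]; ring,
      map_add, map_add, L.map_C_mul, L.map_C_mul, hP.orthogonal (j := m) (k := m + 2) (by omega),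
      mul_zero, add_zero]
  have hmixed : recurrenceCoeff P m * L (P (m + 1) * (X ^ 2 * P (m - 1))) =
      recurrenceCoeff P m * L (P (m + 1) * P (m + 1)) := by
    rcases m with _ | k
    · rw [hP.recurrenceCoeff_zero hL heven, zero_mul, zero_mul]
    · rw [Nat.add_sub_cancel]
      exact congrArg _ (hP.apply_mul_X_pow_mul k 2)
  have hX3 : X ^ 3 * (P (m + 1) * P m) =
      X * P (m + 1) * (X * P (m + 1)) +
        C (recurrenceCoeff P m) * (P (m + 1) * (X ^ 2 * P (m - 1))) := by
    rw [show X ^ 3 * (P (m + 1) * P m) = X * P (m + 1) * X * (X * P m) by ring,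
      hP.X_mul_eq_add hL heven m]
    ring
  rw [hX3, map_add, L.map_C_mul, hsq, hmixed, hP.apply_mul_self_succ hL heven (m + 1),
    hP.apply_mul_self_succ hL heven m]
  ring

theorem string_equation [CharZero K] (hP : IsMonicOrthogonal L P)
    (hL : ∀ q, L (q * q) = 0 → q = 0) (heven : ∀ q, L (q.comp (-X)) = L q) {t : K}
    (hpearson : ∀ q, L (derivative q) = L (q * (C 4 * X ^ 3 - C (2 * t) * X))) (m : ℕ) :
    (m + 1 : K) = 4 * recurrenceCoeff P (m + 1) *
      (recurrenceCoeff P m + recurrenceCoeff P (m + 1) + recurrenceCoeff P (m + 2)) -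
        2 * t * recurrenceCoeff P (m + 1) := by
  have h := hpearson (P (m + 1) * P m)
  rw [show P (m + 1) * P m * (C 4 * X ^ 3 - C (2 * t) * X) =
      C 4 * (X ^ 3 * (P (m + 1) * P m)) - C (2 * t) * (P (m + 1) * (X ^ 1 * P m)) by ring,
    map_sub, L.map_C_mul, L.map_C_mul, hP.apply_derivative_mul, hP.apply_X_pow_three_mul hL heven,
    hP.apply_mul_X_pow_mul m 1, hP.apply_mul_self_succ hL heven] at h
  apply mul_right_cancel₀ (hP.apply_mul_self_ne_zero hL m)
  linear_combination h

end IsMonicOrthogonal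

end OrthogonalPolynomials

section StringEquation

variable {R : Type*} [CommRing R] {t : R} {p : ℕ → R}

theorem string_equation_first_integral (hp0 : p 0 = 0) (hp1 : p 1 = 0)
    (hstring : ∀ m : ℕ, (m + 1 : R) =
      4 * (p (m + 1) - p (m + 2)) * (p m - p (m + 3)) - 2 * t * (p (m + 1) - p (m + 2)))
    (m : ℕ) :
    4 * (p (m + 1) - p (m + 2)) * (p (m + 1) - p (m + 3)) * (p m - p (m + 2)) -
      2 * t * (p (m + 1) - p (m + 2)) ^ 2 - (p (m + 1) - p (m + 2)) + 2 * p (m + 1) = 0 := by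
  -- The difference of two consecutive string equations, times `p (m + 1) - p (m + 3)`, telescopes.
  induction m with
  | zero =>
    have h := hstring 0
    rw [hp0, hp1] at h ⊢
    linear_combination p 2 * h
  | succ m ih =>
    have h := hstring (m + 1)
    push_cast at h
    linear_combination ih - (p (m + 1) - p (m + 3)) * h + (p (m + 1) - p (m + 3)) * hstring m

theorem freud_eq_of_string_equation (hp0 : p 0 = 0) (hp1 : p 1 = 0)
    (hstring : ∀ m : ℕ, (m + 1 : R) =
      4 * (p (m + 1) - p (m + 2)) * (p m - p (m + 3)) - 2 * t * (p (m + 1) - p (m + 2)))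
    (n : ℕ) (hn : 1 ≤ n) :
    (p (n - 1) - p (n + 1)) *
        ((n : R) + 2 * t * (p n - p (n + 1)) - 4 * (p (n - 1) - p n) * (p n - p (n + 1)))
      + p n + p (n + 1) - 2 * t * (p n - p (n + 1)) ^ 2 = 0 := by
  obtain ⟨m, rfl⟩ : ∃ m, n = m + 1 := ⟨n - 1, by omega⟩
  rw [Nat.add_sub_cancel]
  push_cast
  linear_combination string_equation_first_integral hp0 hp1 hstring m +
    (p m - p (m + 2)) * hstring m

end StringEquation

theorem integrable_pow_mul_exp_freud (t : ℝ) (k : ℕ) :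
    Integrable fun x : ℝ => x ^ k * exp (-x ^ 4 + t * x ^ 2) := by
  have hgauss : Integrable fun x : ℝ => exp ((t + 1) ^ 2 / 4) * (x ^ k * exp (-1 * x ^ 2)) := by
    have := integrable_rpow_mul_exp_neg_mul_sq one_pos (s := k)
      (by linarith [k.cast_nonneg (α := ℝ)])
    simpa only [Real.rpow_natCast] using this.const_mul (exp ((t + 1) ^ 2 / 4))
  refine hgauss.mono (by fun_prop) (Filter.Eventually.of_forall fun x => ?_)
  have hexp : exp (-x ^ 4 + t * x ^ 2) ≤ exp ((t + 1) ^ 2 / 4) * exp (-1 * x ^ 2) := by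
    rw [← exp_add]
    exact exp_le_exp.2 (by nlinarith [sq_nonneg (x ^ 2 - (t + 1) / 2)])
  simp only [norm_mul, norm_pow, Real.norm_eq_abs, abs_exp]
  calc |x| ^ k * exp (-x ^ 4 + t * x ^ 2)
      ≤ |x| ^ k * (exp ((t + 1) ^ 2 / 4) * exp (-1 * x ^ 2)) := by gcongr
    _ = _ := by ring

theorem integrable_eval_mul_exp_freud (t : ℝ) (q : ℝ[X]) :
    Integrable fun x : ℝ => q.eval x * exp (-x ^ 4 + t * x ^ 2) := by
  simp_rw [eval_eq_sum_range, Finset.sum_mul, mul_assoc]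
  exact integrable_finsetSum _ fun k _ => (integrable_pow_mul_exp_freud t k).const_mul _

noncomputable def freudFunctional (t : ℝ) : ℝ[X] →ₗ[ℝ] ℝ where
  toFun q := ∫ x, q.eval x * exp (-x ^ 4 + t * x ^ 2)
  map_add' q r := by
    simp only [eval_add, add_mul]
    exact integral_add (integrable_eval_mul_exp_freud t q) (integrable_eval_mul_exp_freud t r)
  map_smul' c q := by
    simp only [eval_smul, smul_eq_mul, mul_assoc, RingHom.id_apply]
    exact integral_const_mul c _

theorem freudFunctional_apply (t : ℝ) (q : ℝ[X]) :
    freudFunctional t q = ∫ x, q.eval x * exp (-x ^ 4 + t * x ^ 2) := rfl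

theorem freudFunctional_mul_self_eq_zero {t : ℝ} {q : ℝ[X]}
    (h : freudFunctional t (q * q) = 0) : q = 0 := by
  set f := fun x => (q * q).eval x * exp (-x ^ 4 + t * x ^ 2)
  have hf : 0 ≤ f := fun x => by
    simp only [f, eval_mul]
    exact mul_nonneg (mul_self_nonneg _) (exp_pos _).le
  have hf0 : f = 0 := (Continuous.ae_eq_iff_eq volume (by fun_prop) continuous_const).1
    ((integral_eq_zero_iff_of_nonneg hf (integrable_eval_mul_exp_freud t _)).1 h)
  refine Polynomial.funext fun x => ?_
  simpa [f, (exp_pos _).ne'] using congrFun hf0 x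

theorem freudFunctional_comp_neg_X (t : ℝ) (q : ℝ[X]) :
    freudFunctional t (q.comp (-X)) = freudFunctional t q := by
  rw [freudFunctional_apply, freudFunctional_apply, ← integral_neg_eq_self]
  simp [Even.neg_pow (by decide : Even 4), Even.neg_pow even_two]

theorem freudFunctional_derivative (t : ℝ) (q : ℝ[X]) :
    freudFunctional t (derivative q) =
      freudFunctional t (q * (C 4 * X ^ 3 - C (2 * t) * X)) := by
  have hderiv : ∀ x, HasDerivAt (fun x => q.eval x * exp (-x ^ 4 + t * x ^ 2))
      ((derivative q - q * (C 4 * X ^ 3 - C (2 * t) * X)).eval x *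
        exp (-x ^ 4 + t * x ^ 2)) x := by
    intro x
    refine ((q.hasDerivAt x).fun_mul (((hasDerivAt_pow 4 x).fun_neg.fun_add
      ((hasDerivAt_pow 2 x).const_mul t)).exp)).congr_deriv ?_
    simp only [eval_sub, eval_mul, eval_C, eval_pow, eval_X]
    ring
  rw [← sub_eq_zero, ← map_sub]
  exact integral_eq_zero_of_hasDerivAt_of_integrable hderiv
    (integrable_eval_mul_exp_freud t _) (integrable_eval_mul_exp_freud t q)

theorem stmt16 (t : ℝ) (P : ℕ → Polynomial ℝ)
    (hmonic : ∀ n, (P n).Monic) (hdeg : ∀ n, (P n).natDegree = n)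
    (horth : ∀ j k, j ≠ k →
      ∫ x : ℝ, (P j).eval x * (P k).eval x * Real.exp (-x ^ 4 + t * x ^ 2) = 0)
    (p : ℕ → ℝ) (hp0 : p 0 = 0) (hp1 : p 1 = 0)
    (hp : ∀ n, 2 ≤ n → p n = (P n).coeff (n - 2))
    (n : ℕ) (hn : 1 ≤ n) :
    (p (n - 1) - p (n + 1)) *
        ((n : ℝ) + 2 * t * (p n - p (n + 1)) - 4 * (p (n - 1) - p n) * (p n - p (n + 1)))
      + p n + p (n + 1) - 2 * t * (p n - p (n + 1)) ^ 2 = 0 := by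
  have hP : IsMonicOrthogonal (freudFunctional t) P :=
    ⟨hmonic, hdeg, fun j k hjk => by
      simpa only [freudFunctional_apply, eval_mul] using horth j k hjk⟩
  have hL : ∀ q, freudFunctional t (q * q) = 0 → q = 0 :=
    fun _ => freudFunctional_mul_self_eq_zero
  have heven := freudFunctional_comp_neg_X t
  have hβ : ∀ k, recurrenceCoeff P k = p k - p (k + 1) := by
    rintro (_ | _ | k)
    · rw [hP.recurrenceCoeff_zero hL heven, hp0, hp1, sub_zero]
    · rw [recurrenceCoeff, coeff_sub, coeff_X_mul_zero, hp1, hp 2 le_rfl]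
    · rw [recurrenceCoeff, coeff_sub, show k + 2 - 1 = k + 1 from rfl, coeff_X_mul,
        hp (k + 2) (by omega), hp (k + 3) (by omega)]
      rfl
  refine freud_eq_of_string_equation hp0 hp1 (fun m => ?_) n hn
  have h := hP.string_equation hL heven (freudFunctional_derivative t) m
  rw [hβ, hβ, hβ] at h
  linear_combination h
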